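/- In any execution of the multi-writer auditable register implementation (Algorithm 1), if win and win' are two sequences read from a sliding register SLR[x] after a write of a w-tuple has been applied to SLR[x], then READERS(win) = READERS(win'). -/

import Mathlib

/-!
# An operational model of Algorithm 1 (multi-writer auditable register)

The algorithm implements an `n`-writer `m`-reader auditable register from an
unbounded array `SLR[-1,0,1,...]` of `(m+n)`-sliding registers, a max register
`M` storing a triple `(widx, ridx, auditset)` (ordered by its first field,
modelled here as an atomic object), and an array `H[1..m]` of single-writer
registers.  Each line of the pseudo-code is a step; readers, writers and
auditors are modelled by explicit program counters, and executions are
alternating sequences of configurations and labelled steps starting from the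
initial configuration.
-/

namespace Alg1

/-- Values stored in the auditable register. -/
abbrev Val := ℕ

/-- Entries of the sliding registers: `w`-tuples `(w, j, v, h)` posted by
    writers (with `h` a helping set of readers) and reader identifiers. -/
inductive Entry (m n : ℕ) where
  | w (j : Fin n) (v : Val) (h : Finset (Fin m))
  | r (i : Fin m)

variable {m n : ℕ}

def Entry.isW : Entry m n → Bool
  | .w _ _ _ => true
  | .r _ => false

/-- Does the window contain a `w`-tuple? -/
def hasW (win : List (Entry m n)) : Bool := win.any Entry.isW

/-- The first `w`-tuple in a window, if any. -/
def firstW : List (Entry m n) → Option (Fin n × Val × Finset (Fin m))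
  | [] => none
  | .w j v h :: _ => some (j, v, h)
  | .r _ :: rest => firstW rest

/-- `getValue`: the value of the first `w`-tuple of a window (default `0`). -/
def wval (win : List (Entry m n)) : Val := ((firstW win).map fun t => t.2.1).getD 0

/-- Reader identifiers that precede every `w`-tuple of a window. -/
def preW : List (Entry m n) → Finset (Fin m)
  | [] => ∅
  | .w _ _ _ :: _ => ∅
  | .r i :: rest => insert i (preW rest)

/-- `READERS(win)`: readers preceding every `w`-tuple, together with the
    helping set of the first `w`-tuple, if any. -/
def readersOf (win : List (Entry m n)) : Finset (Fin m) :=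
  preW win ∪ ((firstW win).map fun t => t.2.2).getD ∅

/-- Content of the max register `M`: a triple `(widx, ridx, auditset)`,
    ordered by the first field. -/
structure MVal (m : ℕ) where
  widx : ℤ
  ridx : Fin m → ℤ
  aud : Finset (Fin m × Val)

/-- Semantics of `writeMax` on `M`. -/
def wmax (old new : MVal m) : MVal m := if old.widx < new.widx then new else old

/-- The triple written to `M` after reading window `win` from `SLR[x]`:
    `(x+1, ridx[j ∈ READERS(win)] := x, auditset ∪ {(j, lv) : j ∈ READERS(win)})`. -/
def mArg (mc : MVal m) (win : List (Entry m n)) (x : ℤ) (lv : Val) : MVal m where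
  widx := x + 1
  ridx := fun j => if j ∈ readersOf win then x else mc.ridx j
  aud := mc.aud ∪ (readersOf win).image fun j => (j, lv)

/-- Write to a `k`-sliding register: append, keeping the last `k` entries. -/
def slide (k : ℕ) (l : List (Entry m n)) (e : Entry m n) : List (Entry m n) :=
  let l' := l ++ [e]
  l'.drop (l'.length - k)

/-- Program counter of a reader (one state per line of the pseudo-code). -/
inductive RPC where
  | idle
  | precheck   -- read `SLR[lsr]` (line `rd_last_wd`)
  | preM       -- read `M` (line `new_write`)
  | preHelp    -- `writeMax` on `M` (line `rd_help_M1`)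
  | loopM      -- read `M` at the head of the repeat loop (line `rd_M`)
  | helpVal    -- found help: read `SLR[lsr-1]` (`getValue`, line `rd_return_help`)
  | annH       -- write `H[i] := lsr` (line `rd_annouce_att`)
  | wSLR       -- write `i` to `SLR[lsr]` (line `rd_do_att`)
  | rSLR       -- read `SLR[lsr]` (line `rd_do_att`)
  | gVal       -- read `SLR[lsr-1]` (`getValue`, line `rd_val`)
  | helpChk    -- help the pending write to complete (line `rd_help_M2`)
  | loopEnd    -- evaluate the until condition (line `rd_att_success`)
  | retNow     -- return `lval`

structure RState (m n : ℕ) where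
  lsr : ℤ
  lval : Val
  mc : MVal m
  win : List (Entry m n)
  it : ℕ          -- number of iterations of the repeat loop of the current READ
  pc : RPC

/-- Program counter of a writer. -/
inductive WPC where
  | idle
  | readM    -- read `M` (line `w_read_M`)
  | scanH    -- read `H[k]` (line `w_att`)
  | scanS    -- read `SLR[a_k]` (line `w_help_wd`)
  | post     -- write the `w`-tuple to `SLR[widx]` (line `w_write_SLR`)
  | postR    -- read `SLR[widx]`
  | postV    -- read `SLR[widx-1]` (`getValue`)
  | postM    -- `writeMax` on `M` (line `w_write_M`)
  | wret     -- return

structure WState (m n : ℕ) where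
  v : Val
  mc : MVal m
  toHelp : Finset (Fin m)
  k : ℕ
  a : ℤ
  win : List (Entry m n)
  val : Val
  pc : WPC

/-- Program counter of an auditor. -/
inductive APC where
  | idle
  | aM       -- read `M` (line `adt_read_M`)
  | aR       -- read `SLR[widx]` (line `adt_val`)
  | aV       -- read `SLR[widx-1]` (`getValue`, line `adt_val`)
  | aret     -- return the audit set

structure AState (m n : ℕ) where
  mc : MVal m
  win : List (Entry m n)
  val : Val
  pc : APC

/-- Processes: `m` readers, `n` writers, and arbitrarily many auditors. -/
inductive Proc (m n : ℕ) where
  | rdr (i : Fin m)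
  | wtr (j : Fin n)
  | adt (a : ℕ)
  deriving DecidableEq

/-- A configuration: shared memory plus the local state of every process. -/
structure Config (m n : ℕ) where
  slr : ℤ → List (Entry m n)
  M : MVal m
  H : Fin m → ℤ
  rst : Fin m → RState m n
  wst : Fin n → WState m n
  ast : ℕ → AState m n

/-- Step labels: invocations and responses of high-level operations, and
    primitive operations applied to the base objects. -/
inductive Lbl (m n : ℕ) where
  | invRead (i : Fin m)
  | respRead (i : Fin m) (v : Val)
  | invWrite (j : Fin n) (v : Val)
  | respWrite (j : Fin n)
  | invAudit (a : ℕ)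
  | respAudit (a : ℕ) (A : Finset (Fin m × Val))
  | slrRead (p : Proc m n) (x : ℤ) (win : List (Entry m n))
  | slrWrite (p : Proc m n) (x : ℤ) (e : Entry m n)
  | mRead (p : Proc m n) (v : MVal m)
  | mWrite (p : Proc m n) (v : MVal m)
  | hRead (j : Fin n) (k : Fin m) (a : ℤ)
  | hWrite (i : Fin m) (x : ℤ)
  | tau (p : Proc m n)

def upR (c : Config m n) (i : Fin m) (s : RState m n) : Config m n :=
  { c with rst := Function.update c.rst i s }

def upW (c : Config m n) (j : Fin n) (s : WState m n) : Config m n :=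
  { c with wst := Function.update c.wst j s }

def upA (c : Config m n) (a : ℕ) (s : AState m n) : Config m n :=
  { c with ast := Function.update c.ast a s }

/-- The transition relation of Algorithm 1. -/
def Step (c : Config m n) (l : Lbl m n) (c' : Config m n) : Prop :=
  match l with
  | .invRead i =>
      let s := c.rst i
      s.pc = .idle ∧
      c' = upR c i { s with it := 0, pc := if 0 ≤ s.lsr then RPC.precheck else RPC.loopM }
  | .respRead i v =>
      let s := c.rst i
      s.pc = .retNow ∧ v = s.lval ∧ c' = upR c i { s with pc := .idle }
  | .invWrite j v =>
      let s := c.wst j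
      s.pc = .idle ∧ c' = upW c j { s with v := v, pc := .readM }
  | .respWrite j =>
      let s := c.wst j
      s.pc = .wret ∧ c' = upW c j { s with pc := .idle }
  | .invAudit a =>
      let s := c.ast a
      s.pc = .idle ∧ c' = upA c a { s with pc := .aM }
  | .respAudit a A =>
      let s := c.ast a
      s.pc = .aret ∧
      A = s.mc.aud ∪ (readersOf s.win).image (fun j => (j, s.val)) ∧
      c' = upA c a { s with pc := .idle }
  | .slrRead p x win =>
      win = c.slr x ∧
      (match p with
       | .rdr i =>
          let s := c.rst i
          (s.pc = .precheck ∧ x = s.lsr ∧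
             c' = upR c i { s with win := win, pc := if hasW win then RPC.preM else RPC.retNow }) ∨
          (s.pc = .helpVal ∧ x = s.lsr - 1 ∧
             c' = upR c i { s with lval := wval win, pc := .retNow }) ∨
          (s.pc = .rSLR ∧ x = s.lsr ∧
             c' = upR c i { s with win := win, pc := .gVal }) ∨
          (s.pc = .gVal ∧ x = s.lsr - 1 ∧
             c' = upR c i { s with lval := wval win, pc := .helpChk })
       | .wtr j =>
          let s := c.wst j
          (s.pc = .scanS ∧ x = s.a ∧
             (∃ hk : s.k < m,
               c' = upW c j { s with toHelp := if (⟨s.k, hk⟩ : Fin m) ∈ readersOf win then s.toHelp else insert (⟨s.k, hk⟩ : Fin m) s.toHelp, k := s.k + 1, pc := .scanH })) ∨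
          (s.pc = .postR ∧ x = s.mc.widx ∧
             c' = upW c j { s with win := win, pc := .postV }) ∨
          (s.pc = .postV ∧ x = s.mc.widx - 1 ∧
             c' = upW c j { s with val := wval win, pc := .postM })
       | .adt a =>
          let s := c.ast a
          (s.pc = .aR ∧ x = s.mc.widx ∧
             c' = upA c a { s with win := win, pc := .aV }) ∨
          (s.pc = .aV ∧ x = s.mc.widx - 1 ∧
             c' = upA c a { s with val := wval win, pc := .aret }))
  | .slrWrite p x e =>
      (match p with
       | .rdr i =>
          let s := c.rst i
          s.pc = .wSLR ∧ x = s.lsr ∧ e = .r i ∧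
          c' = { upR c i { s with pc := .rSLR } with
                 slr := Function.update c.slr x (slide (m + n) (c.slr x) e) }
       | .wtr j =>
          let s := c.wst j
          s.pc = .post ∧ x = s.mc.widx ∧ e = .w j s.v s.toHelp ∧
          c' = { upW c j { s with pc := .postR } with
                 slr := Function.update c.slr x (slide (m + n) (c.slr x) e) }
       | .adt _ => False)
  | .mRead p v =>
      v = c.M ∧
      (match p with
       | .rdr i =>
          let s := c.rst i
          (s.pc = .preM ∧
             c' = upR c i { s with mc := v, pc := if v.widx = s.lsr then RPC.preHelp else RPC.loopM }) ∨
          (s.pc = .loopM ∧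
             c' = upR c i (if s.lsr < v.ridx i then
                { s with mc := v, it := s.it + 1, lsr := v.ridx i, pc := .helpVal }
              else
                { s with mc := v, it := s.it + 1, lsr := v.widx, pc := .annH }))
       | .wtr j =>
          let s := c.wst j
          s.pc = .readM ∧
          c' = upW c j { s with mc := v, toHelp := ∅, k := 0, pc := .scanH }
       | .adt a =>
          let s := c.ast a
          s.pc = .aM ∧ c' = upA c a { s with mc := v, pc := .aR })
  | .mWrite p v =>
      (match p with
       | .rdr i =>
          let s := c.rst i
          (s.pc = .preHelp ∧ v = mArg s.mc s.win s.lsr s.lval ∧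
             c' = { upR c i { s with pc := .loopM } with M := wmax c.M v }) ∨
          (s.pc = .helpChk ∧ hasW s.win = true ∧ v = mArg s.mc s.win s.lsr s.lval ∧
             c' = { upR c i { s with pc := .loopEnd } with M := wmax c.M v })
       | .wtr j =>
          let s := c.wst j
          s.pc = .postM ∧ v = mArg s.mc s.win s.mc.widx s.val ∧
          c' = { upW c j { s with pc := .wret } with M := wmax c.M v }
       | .adt _ => False)
  | .hRead j k a =>
      let s := c.wst j
      s.pc = .scanH ∧ (k : ℕ) = s.k ∧ a = c.H k ∧
      c' = upW c j (if s.mc.ridx k < a then { s with a := a, pc := .scanS }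
                    else { s with k := s.k + 1 })
  | .hWrite i x =>
      let s := c.rst i
      s.pc = .annH ∧ x = s.lsr ∧
      c' = { upR c i { s with pc := .wSLR } with H := Function.update c.H i x }
  | .tau p =>
      match p with
      | .rdr i =>
          let s := c.rst i
          (s.pc = .helpChk ∧ hasW s.win = false ∧
             c' = upR c i { s with pc := .loopEnd }) ∨
          (s.pc = .loopEnd ∧
             c' = upR c i { s with pc := if i ∈ readersOf s.win then RPC.retNow else RPC.loopM })
      | .wtr j =>
          let s := c.wst j
          s.pc = .scanH ∧ s.k = m ∧ c' = upW c j { s with pc := .post }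
      | .adt _ => False

/-- The initial configuration: `SLR[-1]` holds `(w, j₀, v₀, ∅)`, all other
    sliding registers are empty, `M = (0, [-1,…,-1], ∅)`, `H = [-1,…,-1]`,
    and every process is idle (readers start with `lsr = -1`). -/
def init (m n : ℕ) (v0 : Val) (j0 : Fin n) : Config m n where
  slr := fun x => if x = -1 then [.w j0 v0 ∅] else []
  M := ⟨0, fun _ => -1, ∅⟩
  H := fun _ => -1
  rst := fun _ => ⟨-1, v0, ⟨0, fun _ => -1, ∅⟩, [], 0, .idle⟩
  wst := fun _ => ⟨v0, ⟨0, fun _ => -1, ∅⟩, ∅, 0, -1, [], v0, .idle⟩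
  ast := fun _ => ⟨⟨0, fun _ => -1, ∅⟩, [], v0, .idle⟩

/-- A finite execution of Algorithm 1: configurations `cfg 0, …, cfg len`
    connected by labelled steps. -/
structure Exec (m n : ℕ) (v0 : Val) (j0 : Fin n) where
  len : ℕ
  cfg : ℕ → Config m n
  lbl : ℕ → Lbl m n
  h0 : cfg 0 = init m n v0 j0
  hstep : ∀ t, t < len → Step (cfg t) (lbl t) (cfg (t + 1))

variable {v0 : Val} {j0 : Fin n}

/-! ### Derived notions -/

/-- The process performing a step. -/
def procOf : Lbl m n → Proc m n
  | .invRead i => .rdr i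
  | .respRead i _ => .rdr i
  | .invWrite j _ => .wtr j
  | .respWrite j => .wtr j
  | .invAudit a => .adt a
  | .respAudit a _ => .adt a
  | .slrRead p _ _ => p
  | .slrWrite p _ _ => p
  | .mRead p _ => p
  | .mWrite p _ => p
  | .hRead j _ _ => .wtr j
  | .hWrite i _ => .rdr i
  | .tau p => p

/-- The label writes a `w`-tuple to `SLR[x]`. -/
def isWWrite (l : Lbl m n) (x : ℤ) : Prop :=
  ∃ p j v h, l = .slrWrite p x (.w j v h)

/-- Step `t` is the first write of a `w`-tuple to `SLR[x]` in the execution. -/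
def FirstWWriteAt (E : Exec m n v0 j0) (x : ℤ) (t : ℕ) : Prop :=
  t < E.len ∧ isWWrite (E.lbl t) x ∧ ∀ t', t' < t → ¬ isWWrite (E.lbl t') x

/-- Step `t` changes `M.widx` from `ℓ - 1` to `ℓ`. -/
def WidxChangeAt (E : Exec m n v0 j0) (ℓ : ℤ) (t : ℕ) : Prop :=
  t < E.len ∧ (∃ p v, E.lbl t = .mWrite p v) ∧
  (E.cfg t).M.widx = ℓ - 1 ∧ (E.cfg (t + 1)).M.widx = ℓ

/-- `x` is the largest index of a sliding register containing a `w`-tuple. -/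
def WIDXis (c : Config m n) (x : ℤ) : Prop :=
  hasW (c.slr x) = true ∧ ∀ y : ℤ, x < y → hasW (c.slr y) = false

/-- Configuration in region `D_ℓ`: `M.widx = ℓ = WIDX + 1`. -/
def inD (c : Config m n) (ℓ : ℤ) : Prop := c.M.widx = ℓ ∧ WIDXis c (ℓ - 1)

/-- Configuration in region `E_ℓ`: `M.widx = ℓ = WIDX`. -/
def inE (c : Config m n) (ℓ : ℤ) : Prop := c.M.widx = ℓ ∧ WIDXis c ℓ

/-! ### Classification of operations, and linearizations -/

/-- Classification of the operations of Algorithm 1. -/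
inductive Kind where
  | silentR | directR | helpedR | visibleW | hiddenW | defA | nondefA
  deriving DecidableEq

/-- Rank used by the linearization rules `R1`–`R4` within a block of
    operations with the same index. -/
def rank : Kind → ℕ
  | .silentR => 0
  | .directR => 0
  | .nondefA => 0
  | .helpedR => 1
  | .defA => 2
  | .hiddenW => 3
  | .visibleW => 4

def Kind.isRead : Kind → Prop
  | .silentR => True | .directR => True | .helpedR => True
  | _ => False

def Kind.isWrite : Kind → Prop
  | .visibleW => True | .hiddenW => True
  | _ => False

def Kind.isAudit : Kind → Prop
  | .defA => True | .nondefA => True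
  | _ => False

/-- The data of a classified operation: its process, invocation step, optional
    response step, kind, associated sliding-register index `idx`, its
    characteristic step `key` on `SLR[idx]` (used by the linearization rules),
    its value (return value of a READ / input of a WRITE) and, for an AUDIT,
    the returned audit set. -/
structure OpData (m n : ℕ) where
  proc : Proc m n
  inv : ℕ
  resp : Option ℕ
  kind : Kind
  idx : ℤ
  key : ℕ
  val : Val
  aset : Finset (Fin m × Val)

/-- The label is a response event of process `p`. -/
def isRespOf (l : Lbl m n) (p : Proc m n) : Prop :=
  (∃ i v, p = .rdr i ∧ l = .respRead i v) ∨
  (∃ j, p = .wtr j ∧ l = .respWrite j) ∨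
  (∃ a A, p = .adt a ∧ l = .respAudit a A)

/-- `resp` is the matching response of the operation of `p` invoked at `a`
    (or the operation is pending if `resp = none`). -/
def RespMatch (E : Exec m n v0 j0) (p : Proc m n) (a : ℕ) : Option ℕ → Prop
  | some b => a < b ∧ b < E.len ∧ isRespOf (E.lbl b) p ∧
      ∀ t, a < t → t < b → ¬ isRespOf (E.lbl t) p
  | none => ∀ t, a < t → t < E.len → ¬ isRespOf (E.lbl t) p

/-- `x` is the smallest index `> x0` of a sliding register in which reader `i`
    is recorded (evaluated in the final configuration). -/
def minRecIdx (E : Exec m n v0 j0) (i : Fin m) (x0 x : ℤ) : Prop :=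
  x0 < x ∧ i ∈ readersOf ((E.cfg E.len).slr x) ∧
    ∀ y : ℤ, x0 < y → y < x → i ∉ readersOf ((E.cfg E.len).slr y)

/-- The return value of a classified READ: the actual response if the READ is
    complete; for a pending classified READ (completed in `H'`), the value of
    the first `w`-tuple of `SLR[idx-1]`. -/
def ReadValOK (E : Exec m n v0 j0) (o : OpData m n) (i : Fin m) : Prop :=
  match o.resp with
  | some b => E.lbl b = .respRead i o.val
  | none => o.val = wval ((E.cfg E.len).slr (o.idx - 1))

/-- `o` describes a classified operation of the execution `E`. -/
def IsOp (E : Exec m n v0 j0) (o : OpData m n) : Prop :=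
  o.inv < E.len ∧ RespMatch E o.proc o.inv o.resp ∧
  match o.kind with
  | .silentR =>
      ∃ i b win, o.proc = .rdr i ∧ o.resp = some b ∧
        E.lbl o.inv = .invRead i ∧
        (∃ t', t' < o.inv ∧ E.lbl t' = .invRead i) ∧
        o.idx = ((E.cfg o.inv).rst i).lsr ∧
        o.inv < o.key ∧ o.key < b ∧
        E.lbl o.key = .slrRead (.rdr i) o.idx win ∧
        ((E.cfg o.key).rst i).pc = .precheck ∧
        hasW win = false ∧
        E.lbl b = .respRead i o.val ∧
        o.aset = ∅
  | .directR =>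
      ∃ i, o.proc = .rdr i ∧ E.lbl o.inv = .invRead i ∧
        minRecIdx E i ((E.cfg o.inv).rst i).lsr o.idx ∧
        i ∈ preW ((E.cfg E.len).slr o.idx) ∧
        o.inv < o.key ∧ o.key < E.len ∧
        E.lbl o.key = .slrWrite (.rdr i) o.idx (.r i) ∧
        (∀ b, o.resp = some b → o.key < b) ∧
        ReadValOK E o i ∧ o.aset = ∅
  | .helpedR =>
      ∃ i, o.proc = .rdr i ∧ E.lbl o.inv = .invRead i ∧
        minRecIdx E i ((E.cfg o.inv).rst i).lsr o.idx ∧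
        i ∉ preW ((E.cfg E.len).slr o.idx) ∧
        o.key = o.inv ∧ ReadValOK E o i ∧ o.aset = ∅
  | .visibleW =>
      ∃ j h, o.proc = .wtr j ∧ E.lbl o.inv = .invWrite j o.val ∧
        o.inv < o.key ∧ o.key < E.len ∧
        E.lbl o.key = .slrWrite (.wtr j) o.idx (.w j o.val h) ∧
        (∀ b, o.resp = some b → o.key < b) ∧
        firstW ((E.cfg E.len).slr o.idx) = some (j, o.val, h) ∧
        o.aset = ∅
  | .hiddenW =>
      ∃ j h, o.proc = .wtr j ∧ E.lbl o.inv = .invWrite j o.val ∧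
        o.inv < o.key ∧ o.key < E.len ∧
        E.lbl o.key = .slrWrite (.wtr j) o.idx (.w j o.val h) ∧
        (∀ b, o.resp = some b → o.key < b) ∧
        firstW ((E.cfg E.len).slr o.idx) ≠ some (j, o.val, h) ∧
        o.aset = ∅
  | .defA =>
      ∃ a b tM mv win, o.proc = .adt a ∧ o.resp = some b ∧
        E.lbl o.inv = .invAudit a ∧
        o.inv < tM ∧ tM < o.key ∧ o.key < b ∧
        E.lbl tM = .mRead (.adt a) mv ∧ ((E.cfg tM).ast a).pc = .aM ∧
        o.idx = mv.widx ∧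
        E.lbl o.key = .slrRead (.adt a) o.idx win ∧
        ((E.cfg o.key).ast a).pc = .aR ∧
        hasW win = true ∧
        E.lbl b = .respAudit a o.aset ∧ o.val = 0
  | .nondefA =>
      ∃ a b tM mv win, o.proc = .adt a ∧ o.resp = some b ∧
        E.lbl o.inv = .invAudit a ∧
        o.inv < tM ∧ tM < o.key ∧ o.key < b ∧
        E.lbl tM = .mRead (.adt a) mv ∧ ((E.cfg tM).ast a).pc = .aM ∧
        o.idx = mv.widx ∧
        E.lbl o.key = .slrRead (.adt a) o.idx win ∧
        ((E.cfg o.key).ast a).pc = .aR ∧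
        hasW win = false ∧
        E.lbl b = .respAudit a o.aset ∧ o.val = 0

/-- `o` terminates (its response event occurs) before `o'` starts. -/
def EndsBefore (o o' : OpData m n) : Prop :=
  ∃ b, o.resp = some b ∧ b < o'.inv

/-- `lt` is a linearization of the classified operations of `E` obeying the
    rules `R0`–`R4`: a strict total order on classified operations, ordering
    operations by increasing `idx` (`R0`); within the same `idx`, first
    silent READs, direct READs and non-definitive AUDITs ordered by their
    characteristic step on `SLR[idx]` (`R1`), then helped READs in arbitrary
    order followed by the definitive AUDITs ordered by their read of
    `SLR[idx]` (`R2`), then the hidden WRITEs ordered by their write to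
    `SLR[idx]` (`R3`), and the visible WRITE last (`R4`). -/
def LinOK (E : Exec m n v0 j0) (lt : OpData m n → OpData m n → Prop) : Prop :=
  (∀ o, IsOp E o → ¬ lt o o) ∧
  (∀ o₁ o₂ o₃, IsOp E o₁ → IsOp E o₂ → IsOp E o₃ →
      lt o₁ o₂ → lt o₂ o₃ → lt o₁ o₃) ∧
  (∀ o₁ o₂, IsOp E o₁ → IsOp E o₂ → o₁ ≠ o₂ → lt o₁ o₂ ∨ lt o₂ o₁) ∧
  (∀ o₁ o₂, IsOp E o₁ → IsOp E o₂ → o₁.idx < o₂.idx → lt o₁ o₂) ∧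
  (∀ o₁ o₂, IsOp E o₁ → IsOp E o₂ → o₁.idx = o₂.idx →
      rank o₁.kind < rank o₂.kind → lt o₁ o₂) ∧
  (∀ o₁ o₂, IsOp E o₁ → IsOp E o₂ → o₁.idx = o₂.idx →
      rank o₁.kind = rank o₂.kind → o₁.kind ≠ .helpedR →
      o₁.key < o₂.key → lt o₁ o₂)

/-! ### Auxiliary development for `readers_stable` -/

section Stability

/-- Number of `w`-tuples of writer `j` in a window. -/
def cntW (j : Fin n) (l : List (Entry m n)) : ℕ :=
  l.countP (fun e => match e with | .w j' _ _ => decide (j' = j) | .r _ => false)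

/-- Number of occurrences of reader `i` in a window. -/
def cntR (i : Fin m) (l : List (Entry m n)) : ℕ :=
  l.countP (fun e => match e with | .r i' => decide (i' = i) | _ => false)

lemma cntW_nil (j : Fin n) : cntW j ([] : List (Entry m n)) = 0 := rfl
lemma cntR_nil (i : Fin m) : cntR i ([] : List (Entry m n)) = 0 := rfl

lemma cntW_cons (j : Fin n) (e : Entry m n) (l : List (Entry m n)) :
    cntW j (e :: l) = cntW j l +
      (match e with | .w j' _ _ => if j' = j then 1 else 0 | .r _ => 0) := by
  cases e <;> simp [cntW, List.countP_cons]

lemma cntR_cons (i : Fin m) (e : Entry m n) (l : List (Entry m n)) :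
    cntR i (e :: l) = cntR i l +
      (match e with | .r i' => if i' = i then 1 else 0 | _ => 0) := by
  cases e <;> simp [cntR, List.countP_cons]

lemma cntW_append (j : Fin n) (l l' : List (Entry m n)) :
    cntW j (l ++ l') = cntW j l + cntW j l' := List.countP_append

lemma cntR_append (i : Fin m) (l l' : List (Entry m n)) :
    cntR i (l ++ l') = cntR i l + cntR i l' := List.countP_append

lemma length_eq_sum (l : List (Entry m n)) :
    l.length = (∑ j : Fin n, cntW j l) + (∑ i : Fin m, cntR i l) := by
  induction l with
  | nil => simp [cntW_nil, cntR_nil]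
  | cons e l ih =>
    cases e with
    | w j v h =>
      simp only [List.length_cons, ih, cntW_cons, cntR_cons]
      simp [Finset.sum_add_distrib]
      omega
    | r i =>
      simp only [List.length_cons, ih, cntW_cons, cntR_cons]
      simp [Finset.sum_add_distrib]
      omega

lemma length_lt_of_cntW (l : List (Entry m n)) (j : Fin n) (h : cntW j l = 0)
    (hW : ∀ j', cntW j' l ≤ 1) (hR : ∀ i, cntR i l ≤ 1) : l.length < m + n := by
  have hsW : (∑ j' : Fin n, cntW j' l) ≤ n - 1 := by
    have h1 : (∑ j' : Fin n, cntW j' l)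
        = cntW j l + ∑ j' ∈ Finset.univ.erase j, cntW j' l :=
      (Finset.add_sum_erase _ _ (Finset.mem_univ j)).symm
    have h2 : (∑ j' ∈ Finset.univ.erase j, cntW j' l) ≤ (Finset.univ.erase j).card • 1 :=
      Finset.sum_le_card_nsmul _ _ 1 (fun j' _ => hW j')
    have h3 : (Finset.univ.erase j).card = n - 1 := by
      rw [Finset.card_erase_of_mem (Finset.mem_univ j)]; simp
    simp [h3, h] at h1 h2 ⊢; omega
  have hsR : (∑ i : Fin m, cntR i l) ≤ m := by
    have h2 : (∑ i : Fin m, cntR i l) ≤ (Finset.univ : Finset (Fin m)).card • 1 :=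
      Finset.sum_le_card_nsmul _ _ 1 (fun i _ => hR i)
    simpa using h2
  have hn : 0 < n := j.pos
  have := length_eq_sum l
  omega

lemma length_lt_of_cntR (l : List (Entry m n)) (i : Fin m) (h : cntR i l = 0)
    (hW : ∀ j', cntW j' l ≤ 1) (hR : ∀ i', cntR i' l ≤ 1) : l.length < m + n := by
  have hsR : (∑ i' : Fin m, cntR i' l) ≤ m - 1 := by
    have h1 : (∑ i' : Fin m, cntR i' l)
        = cntR i l + ∑ i' ∈ Finset.univ.erase i, cntR i' l :=
      (Finset.add_sum_erase _ _ (Finset.mem_univ i)).symm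
    have h2 : (∑ i' ∈ Finset.univ.erase i, cntR i' l) ≤ (Finset.univ.erase i).card • 1 :=
      Finset.sum_le_card_nsmul _ _ 1 (fun i' _ => hR i')
    have h3 : (Finset.univ.erase i).card = m - 1 := by
      rw [Finset.card_erase_of_mem (Finset.mem_univ i)]; simp
    simp [h3, h] at h1 h2 ⊢; omega
  have hsW : (∑ j' : Fin n, cntW j' l) ≤ n := by
    have h2 : (∑ j' : Fin n, cntW j' l) ≤ (Finset.univ : Finset (Fin n)).card • 1 :=
      Finset.sum_le_card_nsmul _ _ 1 (fun j' _ => hW j')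
    simpa using h2
  have hm : 0 < m := i.pos
  have := length_eq_sum l
  omega

lemma hasW_append_left {l l' : List (Entry m n)} (h : hasW l = true) :
    hasW (l ++ l') = true := by
  simp only [hasW, List.any_append, Bool.or_eq_true]
  exact Or.inl h

lemma hasW_cons_r (i : Fin m) (l : List (Entry m n)) :
    hasW (Entry.r i :: l) = hasW l := by
  simp [hasW, Entry.isW]

lemma firstW_append {l : List (Entry m n)} (l' : List (Entry m n)) (h : hasW l = true) :
    firstW (l ++ l') = firstW l := by
  induction l with
  | nil => simp [hasW] at h
  | cons e l ih =>
    cases e with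
    | w j v hs => rfl
    | r i =>
      rw [hasW_cons_r] at h
      simpa [firstW] using ih h

lemma preW_append {l : List (Entry m n)} (l' : List (Entry m n)) (h : hasW l = true) :
    preW (l ++ l') = preW l := by
  induction l with
  | nil => simp [hasW] at h
  | cons e l ih =>
    cases e with
    | w j v hs => rfl
    | r i =>
      rw [hasW_cons_r] at h
      show insert i (preW (l ++ l')) = insert i (preW l)
      rw [ih h]

lemma readersOf_append {l : List (Entry m n)} (l' : List (Entry m n)) (h : hasW l = true) :
    readersOf (l ++ l') = readersOf l := by
  unfold readersOf
  rw [preW_append l' h, firstW_append l' h]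

lemma mem_preW {l : List (Entry m n)} {i : Fin m} (h : hasW l = false)
    (hm : Entry.r i ∈ l) : i ∈ preW l := by
  induction l with
  | nil => simp at hm
  | cons e l ih =>
    cases e with
    | w j v hs => simp [hasW, Entry.isW] at h
    | r i' =>
      rw [hasW_cons_r] at h
      rcases List.mem_cons.1 hm with he | hm'
      · cases he; exact Finset.mem_insert_self _ _
      · exact Finset.mem_insert_of_mem (ih h hm')

lemma mem_readersOf {l : List (Entry m n)} {i : Fin m} (h : hasW l = false)
    (hm : Entry.r i ∈ l) : i ∈ readersOf l :=
  Finset.mem_union_left _ (mem_preW h hm)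

lemma slide_eq_append {l : List (Entry m n)} {k : ℕ} (h : l.length < k) (e : Entry m n) :
    slide k l e = l ++ [e] := by
  have h0 : l.length + 1 - k = 0 := by omega
  simp [slide, h0]

end Stability

section Invariant

/-- Reader program counters from which no write to the current `M.widx`
    register can happen without first advancing `M.widx`. -/
def rsafe : RPC → Prop
  | .loopM => False
  | .annH => False
  | .wSLR => False
  | .helpVal => False
  | _ => True

/-- The frontier of a writer: no `w`-tuple of this writer occurs in a sliding
    register with index at least the frontier. -/
def wfrontS (w : ℤ) (s : WState m n) : ℤ :=
  match s.pc with
  | .idle | .readM | .wret => w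
  | .scanH | .scanS | .post => s.mc.widx
  | .postR | .postV | .postM => s.mc.widx + 1

/-- Control-state dependent part of the local invariant of reader `i`. -/
def rcond (w : ℤ) (slr : ℤ → List (Entry m n)) (i : Fin m) (s : RState m n) : Prop :=
  match s.pc with
  | .preHelp => s.mc.widx = s.lsr
  | .annH => s.mc.widx = s.lsr ∧ cntR i (slr s.lsr) = 0
  | .wSLR => s.mc.widx = s.lsr ∧ cntR i (slr s.lsr) = 0
  | .rSLR => s.mc.widx = s.lsr ∧ Entry.r i ∈ slr s.lsr
  | .gVal => s.mc.widx = s.lsr ∧ Entry.r i ∈ s.win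
  | .helpChk => s.mc.widx = s.lsr ∧ Entry.r i ∈ s.win
  | .loopEnd => Entry.r i ∈ s.win ∧ (hasW s.win = true → s.lsr < w)
  | _ => True

/-- Local invariant of reader `i` (given `w = M.widx` and the registers). -/
structure Rloc (w : ℤ) (slr : ℤ → List (Entry m n)) (i : Fin m) (s : RState m n) : Prop where
  mcg : ∀ k, s.mc.ridx k ≤ s.mc.widx
  lsrle : s.lsr ≤ w
  star : ∀ x, cntR i (slr x) = 0 ∨ x < w ∨ (x = w ∧ x = s.lsr ∧ rsafe s.pc)
  cond : rcond w slr i s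

/-- Local invariant of writer `j`. -/
structure Wloc (w : ℤ) (slr : ℤ → List (Entry m n)) (j : Fin n) (s : WState m n) : Prop where
  mcg : ∀ k, s.mc.ridx k ≤ s.mc.widx
  free : ∀ x, wfrontS w s ≤ x → cntW j (slr x) = 0

/-- The global invariant of Algorithm 1. -/
structure Inv (c : Config m n) : Prop where
  m0 : 0 ≤ c.M.widx
  gm : ∀ k, c.M.ridx k ≤ c.M.widx
  wc1 : ∀ j x, cntW j (c.slr x) ≤ 1
  rc1 : ∀ i x, cntR i (c.slr x) ≤ 1
  rloc : ∀ i, Rloc c.M.widx c.slr i (c.rst i)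
  wloc : ∀ j, Wloc c.M.widx c.slr j (c.wst j)

lemma Rloc_mono {w w' : ℤ} {slr : ℤ → List (Entry m n)} {i : Fin m} {s : RState m n}
    (hw : w ≤ w') (h : Rloc w slr i s) : Rloc w' slr i s where
  mcg := h.mcg
  lsrle := le_trans h.lsrle hw
  star := fun x => by
    rcases h.star x with h0 | h1 | ⟨he, hl, hs⟩
    · exact Or.inl h0
    · exact Or.inr (Or.inl (lt_of_lt_of_le h1 hw))
    · rcases lt_or_eq_of_le hw with hlt | heq
      · exact Or.inr (Or.inl (he ▸ hlt))
      · exact Or.inr (Or.inr ⟨heq ▸ he, hl, hs⟩)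
  cond := by
    have hc := h.cond
    unfold rcond at hc ⊢
    cases hp : s.pc <;> simp only [hp] at hc ⊢ <;> try exact hc
    exact ⟨hc.1, fun hW => lt_of_lt_of_le (hc.2 hW) hw⟩

lemma wfrontS_mono {w w' : ℤ} {s : WState m n} (hw : w ≤ w') :
    wfrontS w s ≤ wfrontS w' s := by
  unfold wfrontS; split <;> omega

lemma Wloc_mono {w w' : ℤ} {slr : ℤ → List (Entry m n)} {j : Fin n} {s : WState m n}
    (hw : w ≤ w') (h : Wloc w slr j s) : Wloc w' slr j s where
  mcg := h.mcg
  free := fun x hx => h.free x (le_trans (wfrontS_mono hw) hx)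

lemma cntR_single_w (i : Fin m) (j : Fin n) (v : Val) (hs : Finset (Fin m)) :
    cntR i [Entry.w j v hs] = 0 := rfl

lemma cntR_single_r {i i' : Fin m} (h : i' ≠ i) : cntR i [(Entry.r i' : Entry m n)] = 0 := by
  simp [cntR, List.countP_cons, h]

lemma cntR_single_r_self (i : Fin m) : cntR i [(Entry.r i : Entry m n)] = 1 := by
  simp [cntR, List.countP_cons]

lemma cntW_single_r (j : Fin n) (i : Fin m) : cntW j [(Entry.r i : Entry m n)] = 0 := rfl

lemma cntW_single_w {j j' : Fin n} (h : j' ≠ j) (v : Val) (hs : Finset (Fin m)) :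
    cntW j [(Entry.w j' v hs : Entry m n)] = 0 := by
  simp [cntW, List.countP_cons, h]

lemma cntW_single_w_self (j : Fin n) (v : Val) (hs : Finset (Fin m)) :
    cntW j [(Entry.w j v hs : Entry m n)] = 1 := by
  simp [cntW, List.countP_cons]

/-- Appending an entry that is not `.r i` preserves the local reader invariant. -/
lemma Rloc_update {w : ℤ} {slr : ℤ → List (Entry m n)} {i : Fin m} {s : RState m n}
    (h : Rloc w slr i s) (y : ℤ) (e : Entry m n) (he : cntR i [e] = 0) :
    Rloc w (Function.update slr y (slr y ++ [e])) i s where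
  mcg := h.mcg
  lsrle := h.lsrle
  star := fun x => by
    rcases eq_or_ne x y with rfl | hne
    · rcases h.star x with h0 | h1 | h2
      · exact Or.inl (by simp [Function.update_self, cntR_append, h0, he])
      · exact Or.inr (Or.inl h1)
      · exact Or.inr (Or.inr h2)
    · rw [Function.update_of_ne hne]; exact h.star x
  cond := by
    have hc := h.cond
    have hcnt : ∀ z, cntR i ((Function.update slr y (slr y ++ [e])) z) = cntR i (slr z) := by
      intro z
      rcases eq_or_ne z y with rfl | hne
      · simp [Function.update_self, cntR_append, he]
      · rw [Function.update_of_ne hne]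
    have hmem : ∀ z, Entry.r i ∈ slr z → Entry.r i ∈ (Function.update slr y (slr y ++ [e])) z := by
      intro z hz
      rcases eq_or_ne z y with rfl | hne
      · rw [Function.update_self]; exact List.mem_append_left _ hz
      · rw [Function.update_of_ne hne]; exact hz
    unfold rcond at hc ⊢
    cases hp : s.pc <;> simp only [hp] at hc ⊢ <;> try exact hc
    · exact ⟨hc.1, (hcnt _) ▸ hc.2⟩
    · exact ⟨hc.1, (hcnt _) ▸ hc.2⟩
    · exact ⟨hc.1, hmem _ hc.2⟩

/-- Appending an entry that is not a `w`-tuple of `j` preserves the local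
    writer invariant. -/
lemma Wloc_update {w : ℤ} {slr : ℤ → List (Entry m n)} {j : Fin n} {s : WState m n}
    (h : Wloc w slr j s) (y : ℤ) (e : Entry m n) (he : cntW j [e] = 0) :
    Wloc w (Function.update slr y (slr y ++ [e])) j s where
  mcg := h.mcg
  free := fun x hx => by
    rcases eq_or_ne x y with rfl | hne
    · simp [Function.update_self, cntW_append, h.free x hx, he]
    · rw [Function.update_of_ne hne]; exact h.free x hx

/-- `Inv` only depends on `slr`, `M`, `rst`, `wst`. -/
lemma Inv_of_eq {c c' : Config m n} (hInv : Inv c) (h1 : c'.slr = c.slr)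
    (h2 : c'.M = c.M) (h3 : c'.rst = c.rst) (h4 : c'.wst = c.wst) : Inv c' where
  m0 := h2 ▸ hInv.m0
  gm := h2 ▸ hInv.gm
  wc1 := by rw [h1]; exact hInv.wc1
  rc1 := by rw [h1]; exact hInv.rc1
  rloc := by rw [h1, h2, h3]; exact hInv.rloc
  wloc := by rw [h1, h2, h4]; exact hInv.wloc

/-- A step that only changes the local state of reader `i`. -/
lemma Inv_upR' {c c' : Config m n} (hInv : Inv c) (i : Fin m) (s' : RState m n)
    (hR : Rloc c.M.widx c.slr i s')
    (h1 : c'.slr = c.slr) (h2 : c'.M = c.M)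
    (h3 : c'.rst = Function.update c.rst i s') (h4 : c'.wst = c.wst) : Inv c' where
  m0 := h2 ▸ hInv.m0
  gm := h2 ▸ hInv.gm
  wc1 := by rw [h1]; exact hInv.wc1
  rc1 := by rw [h1]; exact hInv.rc1
  rloc := fun i' => by
    rw [h1, h2, h3]
    rcases eq_or_ne i' i with rfl | hne
    · rw [Function.update_self]; exact hR
    · rw [Function.update_of_ne hne]; exact hInv.rloc i'
  wloc := by rw [h1, h2, h4]; exact hInv.wloc

/-- A step that only changes the local state of writer `j`. -/
lemma Inv_upW' {c c' : Config m n} (hInv : Inv c) (j : Fin n) (s' : WState m n)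
    (hW : Wloc c.M.widx c.slr j s')
    (h1 : c'.slr = c.slr) (h2 : c'.M = c.M)
    (h3 : c'.rst = c.rst) (h4 : c'.wst = Function.update c.wst j s') : Inv c' where
  m0 := h2 ▸ hInv.m0
  gm := h2 ▸ hInv.gm
  wc1 := by rw [h1]; exact hInv.wc1
  rc1 := by rw [h1]; exact hInv.rc1
  rloc := by rw [h1, h2, h3]; exact hInv.rloc
  wloc := fun j' => by
    rw [h1, h2, h4]
    rcases eq_or_ne j' j with rfl | hne
    · rw [Function.update_self]; exact hW
    · rw [Function.update_of_ne hne]; exact hInv.wloc j'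

lemma wmax_widx_left (old new : MVal m) : old.widx ≤ (wmax old new).widx := by
  unfold wmax; split <;> omega

lemma wmax_widx_right (old new : MVal m) : new.widx ≤ (wmax old new).widx := by
  unfold wmax; split <;> omega

lemma wmax_gm {old new : MVal m} (h1 : ∀ k, old.ridx k ≤ old.widx)
    (h2 : ∀ k, new.ridx k ≤ new.widx) : ∀ k, (wmax old new).ridx k ≤ (wmax old new).widx := by
  unfold wmax; split
  · exact h2
  · exact h1

lemma mArg_widx (mc : MVal m) (win : List (Entry m n)) (x : ℤ) (lv : Val) :
    (mArg mc win x lv).widx = x + 1 := rfl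

lemma mArg_gm {mc : MVal m} (win : List (Entry m n)) (x : ℤ) (lv : Val)
    (h : ∀ k, mc.ridx k ≤ mc.widx) (hx : mc.widx ≤ x + 1) :
    ∀ k, (mArg mc win x lv).ridx k ≤ (mArg mc win x lv).widx := by
  intro k
  show (if k ∈ readersOf win then x else mc.ridx k) ≤ x + 1
  split
  · omega
  · exact le_trans (h k) hx

/-- The initial configuration satisfies the invariant. -/
lemma Inv_init : Inv (init m n v0 j0) where
  m0 := le_refl 0
  gm := fun _ => by norm_num [init]
  wc1 := fun j x => by
    simp only [init]
    split
    · rcases eq_or_ne j0 j with rfl | hne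
      · rw [cntW_single_w_self]
      · rw [cntW_single_w hne]; omega
    · rw [cntW_nil]; omega
  rc1 := fun i x => by
    simp only [init]
    split
    · rw [cntR_single_w]; omega
    · rw [cntR_nil]; omega
  rloc := fun i => by
    refine ⟨fun k => by norm_num [init], by norm_num [init], ?_, ?_⟩
    · intro x
      left
      simp only [init]
      split
      · rw [cntR_single_w]
      · rw [cntR_nil]
    · trivial
  wloc := fun j => by
    refine ⟨fun k => by norm_num [init], ?_⟩
    intro x hx
    have hx' : (0:ℤ) ≤ x := by simpa [init, wfrontS] using hx
    have : x ≠ -1 := by omega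
    simp only [init, if_neg this, cntW_nil]

end Invariant

/-- Build the invariant for a configuration given by explicit components. -/
lemma Inv_build {c' : Config m n} {slr : ℤ → List (Entry m n)} {M : MVal m}
    {rst : Fin m → RState m n} {wst : Fin n → WState m n}
    (h1 : c'.slr = slr) (h2 : c'.M = M) (h3 : c'.rst = rst) (h4 : c'.wst = wst)
    (m0 : 0 ≤ M.widx) (gm : ∀ k, M.ridx k ≤ M.widx)
    (wc1 : ∀ j x, cntW j (slr x) ≤ 1) (rc1 : ∀ i x, cntR i (slr x) ≤ 1)
    (rloc : ∀ i, Rloc M.widx slr i (rst i)) (wloc : ∀ j, Wloc M.widx slr j (wst j)) :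
    Inv c' where
  m0 := h2 ▸ m0
  gm := h2 ▸ gm
  wc1 := by rw [h1]; exact wc1
  rc1 := by rw [h1]; exact rc1
  rloc := by rw [h1, h2, h3]; exact rloc
  wloc := by rw [h1, h2, h4]; exact wloc

section StepLemma

/-- Preservation of the invariant along any step of Algorithm 1. -/
lemma Inv_step {c c' : Config m n} {l : Lbl m n} (hInv : Inv c) (hst : Step c l c') :
    Inv c' := by
  cases l with
  | invRead i =>
      obtain ⟨hpc, hc⟩ := hst
      have R := hInv.rloc i
      rcases le_or_gt 0 (c.rst i).lsr with h0 | h0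
      · rw [if_pos h0] at hc
        subst hc
        refine Inv_upR' hInv i _ ?_ rfl rfl rfl rfl
        refine ⟨R.mcg, R.lsrle, ?_, trivial⟩
        intro x
        rcases R.star x with h | h | ⟨he, hl, _⟩
        · exact Or.inl h
        · exact Or.inr (Or.inl h)
        · exact Or.inr (Or.inr ⟨he, hl, trivial⟩)
      · rw [if_neg (by omega)] at hc
        subst hc
        refine Inv_upR' hInv i _ ?_ rfl rfl rfl rfl
        refine ⟨R.mcg, R.lsrle, ?_, trivial⟩
        intro x
        rcases R.star x with h | h | ⟨he, hl, _⟩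
        · exact Or.inl h
        · exact Or.inr (Or.inl h)
        · exfalso; have := hInv.m0; omega
  | respRead i v =>
      obtain ⟨hpc, hv, hc⟩ := hst
      subst hc
      have R := hInv.rloc i
      refine Inv_upR' hInv i _ ?_ rfl rfl rfl rfl
      refine ⟨R.mcg, R.lsrle, ?_, trivial⟩
      intro x
      rcases R.star x with h | h | ⟨he, hl, _⟩
      · exact Or.inl h
      · exact Or.inr (Or.inl h)
      · exact Or.inr (Or.inr ⟨he, hl, trivial⟩)
  | invWrite j v =>
      obtain ⟨hpc, hc⟩ := hst
      subst hc
      have W := hInv.wloc j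
      have hf : wfrontS c.M.widx (c.wst j) = c.M.widx := by unfold wfrontS; rw [hpc]
      refine Inv_upW' hInv j _ ?_ rfl rfl rfl rfl
      refine ⟨W.mcg, ?_⟩
      intro x hx
      exact W.free x (by rw [hf]; exact hx)
  | respWrite j =>
      obtain ⟨hpc, hc⟩ := hst
      subst hc
      have W := hInv.wloc j
      have hf : wfrontS c.M.widx (c.wst j) = c.M.widx := by unfold wfrontS; rw [hpc]
      refine Inv_upW' hInv j _ ?_ rfl rfl rfl rfl
      refine ⟨W.mcg, ?_⟩
      intro x hx
      exact W.free x (by rw [hf]; exact hx)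
  | invAudit a =>
      obtain ⟨hpc, hc⟩ := hst
      subst hc
      exact Inv_of_eq hInv rfl rfl rfl rfl
  | respAudit a A =>
      obtain ⟨hpc, hA, hc⟩ := hst
      subst hc
      exact Inv_of_eq hInv rfl rfl rfl rfl
  | slrRead p x win =>
      obtain ⟨hwin, hp⟩ := hst
      subst hwin
      cases p with
      | rdr i =>
          have R := hInv.rloc i
          rcases hp with ⟨hpc, hx, hc⟩ | ⟨hpc, hx, hc⟩ | ⟨hpc, hx, hc⟩ | ⟨hpc, hx, hc⟩
          · -- precheck
            by_cases hW : hasW (c.slr x) = true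
            · rw [if_pos hW] at hc
              subst hc
              refine Inv_upR' hInv i _ ?_ rfl rfl rfl rfl
              refine ⟨R.mcg, R.lsrle, ?_, trivial⟩
              intro y
              rcases R.star y with h | h | ⟨he, hl, _⟩
              · exact Or.inl h
              · exact Or.inr (Or.inl h)
              · exact Or.inr (Or.inr ⟨he, hl, trivial⟩)
            · rw [if_neg hW] at hc
              subst hc
              refine Inv_upR' hInv i _ ?_ rfl rfl rfl rfl
              refine ⟨R.mcg, R.lsrle, ?_, trivial⟩
              intro y
              rcases R.star y with h | h | ⟨he, hl, _⟩
              · exact Or.inl h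
              · exact Or.inr (Or.inl h)
              · exact Or.inr (Or.inr ⟨he, hl, trivial⟩)
          · -- helpVal
            subst hc
            refine Inv_upR' hInv i _ ?_ rfl rfl rfl rfl
            refine ⟨R.mcg, R.lsrle, ?_, trivial⟩
            intro y
            rcases R.star y with h | h | ⟨he, hl, hs⟩
            · exact Or.inl h
            · exact Or.inr (Or.inl h)
            · rw [hpc] at hs; exact (hs : False).elim
          · -- rSLR
            subst hc
            have hcond := R.cond
            unfold rcond at hcond
            rw [hpc] at hcond
            obtain ⟨hmceq, hmem⟩ := hcond
            refine Inv_upR' hInv i _ ?_ rfl rfl rfl rfl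
            refine ⟨R.mcg, R.lsrle, ?_, ⟨hmceq, ?_⟩⟩
            · intro y
              rcases R.star y with h | h | ⟨he, hl, _⟩
              · exact Or.inl h
              · exact Or.inr (Or.inl h)
              · exact Or.inr (Or.inr ⟨he, hl, trivial⟩)
            · show Entry.r i ∈ c.slr x
              rw [hx]; exact hmem
          · -- gVal
            subst hc
            have hcond := R.cond
            unfold rcond at hcond
            rw [hpc] at hcond
            obtain ⟨hmceq, hmem⟩ := hcond
            refine Inv_upR' hInv i _ ?_ rfl rfl rfl rfl
            refine ⟨R.mcg, R.lsrle, ?_, ⟨hmceq, hmem⟩⟩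
            intro y
            rcases R.star y with h | h | ⟨he, hl, _⟩
            · exact Or.inl h
            · exact Or.inr (Or.inl h)
            · exact Or.inr (Or.inr ⟨he, hl, trivial⟩)
      | wtr j =>
          have W := hInv.wloc j
          rcases hp with ⟨hpc, hx, hkm, hc⟩ | ⟨hpc, hx, hc⟩ | ⟨hpc, hx, hc⟩
          · subst hc
            have hf : wfrontS c.M.widx (c.wst j) = (c.wst j).mc.widx := by
              unfold wfrontS; rw [hpc]
            refine Inv_upW' hInv j _ ?_ rfl rfl rfl rfl
            refine ⟨W.mcg, ?_⟩
            intro y hy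
            exact W.free y (by rw [hf]; exact hy)
          · subst hc
            have hf : wfrontS c.M.widx (c.wst j) = (c.wst j).mc.widx + 1 := by
              unfold wfrontS; rw [hpc]
            refine Inv_upW' hInv j _ ?_ rfl rfl rfl rfl
            refine ⟨W.mcg, ?_⟩
            intro y hy
            exact W.free y (by rw [hf]; exact hy)
          · subst hc
            have hf : wfrontS c.M.widx (c.wst j) = (c.wst j).mc.widx + 1 := by
              unfold wfrontS; rw [hpc]
            refine Inv_upW' hInv j _ ?_ rfl rfl rfl rfl
            refine ⟨W.mcg, ?_⟩
            intro y hy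
            exact W.free y (by rw [hf]; exact hy)
      | adt a =>
          rcases hp with ⟨hpc, hx, hc⟩ | ⟨hpc, hx, hc⟩ <;>
            (subst hc; exact Inv_of_eq hInv rfl rfl rfl rfl)
  | slrWrite p x e =>
      cases p with
      | rdr i =>
          obtain ⟨hpc, hx, he, hc⟩ := hst
          subst he
          subst hx
          have R := hInv.rloc i
          have hcond := R.cond
          unfold rcond at hcond
          rw [hpc] at hcond
          obtain ⟨hmceq, hcnt0⟩ := hcond
          have hlen : (c.slr (c.rst i).lsr).length < m + n :=
            length_lt_of_cntR _ i hcnt0 (fun j' => hInv.wc1 j' _) (fun i' => hInv.rc1 i' _)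
          rw [slide_eq_append hlen] at hc
          refine Inv_build
            (slr := Function.update c.slr (c.rst i).lsr (c.slr (c.rst i).lsr ++ [Entry.r i]))
            (M := c.M) (rst := Function.update c.rst i { c.rst i with pc := RPC.rSLR })
            (wst := c.wst)
            (by rw [hc]; try rfl) (by rw [hc]; try rfl) (by rw [hc]; try rfl) (by rw [hc]; try rfl)
            hInv.m0 hInv.gm ?_ ?_ ?_ ?_
          · -- wc1
            intro j y
            rcases eq_or_ne y (c.rst i).lsr with rfl | hne
            · rw [Function.update_self, cntW_append, cntW_single_r]
              simpa using hInv.wc1 j _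
            · rw [Function.update_of_ne hne]; exact hInv.wc1 j y
          · -- rc1
            intro i' y
            rcases eq_or_ne y (c.rst i).lsr with rfl | hne
            · rw [Function.update_self, cntR_append]
              rcases eq_or_ne i' i with rfl | hne'
              · rw [cntR_single_r_self, hcnt0]
              · rw [cntR_single_r (Ne.symm hne')]
                simpa using hInv.rc1 i' _
            · rw [Function.update_of_ne hne]; exact hInv.rc1 i' y
          · -- rloc
            intro i'
            rcases eq_or_ne i' i with rfl | hne
            · rw [Function.update_self]
              refine ⟨R.mcg, R.lsrle, ?_, ⟨hmceq, ?_⟩⟩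
              · intro y
                rcases eq_or_ne y (c.rst i').lsr with rfl | hney
                · rcases lt_or_eq_of_le R.lsrle with hlt | heqw
                  · exact Or.inr (Or.inl hlt)
                  · exact Or.inr (Or.inr ⟨heqw, rfl, trivial⟩)
                · rw [Function.update_of_ne hney]
                  rcases R.star y with h | h | ⟨he', hl', hs⟩
                  · exact Or.inl h
                  · exact Or.inr (Or.inl h)
                  · exact absurd hl' hney
              · show Entry.r i' ∈ (Function.update c.slr (c.rst i').lsr
                  (c.slr (c.rst i').lsr ++ [Entry.r i'])) (c.rst i').lsr
                rw [Function.update_self]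
                exact List.mem_append_right _ (List.mem_singleton_self _)
            · rw [Function.update_of_ne hne]
              exact Rloc_update (hInv.rloc i') _ _ (cntR_single_r (Ne.symm hne))
          · -- wloc
            intro j
            exact Wloc_update (hInv.wloc j) _ _ (cntW_single_r j i)
      | wtr j =>
          obtain ⟨hpc, hx, he, hc⟩ := hst
          subst he
          subst hx
          have W := hInv.wloc j
          have hf : wfrontS c.M.widx (c.wst j) = (c.wst j).mc.widx := by
            unfold wfrontS; rw [hpc]
          have hcnt0 : cntW j (c.slr (c.wst j).mc.widx) = 0 :=
            W.free _ (le_of_eq hf)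
          have hlen : (c.slr (c.wst j).mc.widx).length < m + n :=
            length_lt_of_cntW _ j hcnt0 (fun j' => hInv.wc1 j' _) (fun i' => hInv.rc1 i' _)
          rw [slide_eq_append hlen] at hc
          refine Inv_build
            (slr := Function.update c.slr (c.wst j).mc.widx
              (c.slr (c.wst j).mc.widx ++ [Entry.w j (c.wst j).v (c.wst j).toHelp]))
            (M := c.M) (rst := c.rst)
            (wst := Function.update c.wst j { c.wst j with pc := WPC.postR })
            (by rw [hc]; try rfl) (by rw [hc]; try rfl) (by rw [hc]; try rfl) (by rw [hc]; try rfl)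
            hInv.m0 hInv.gm ?_ ?_ ?_ ?_
          · -- wc1
            intro j' y
            rcases eq_or_ne y (c.wst j).mc.widx with rfl | hne
            · rw [Function.update_self, cntW_append]
              rcases eq_or_ne j' j with rfl | hne'
              · rw [cntW_single_w_self, hcnt0]
              · rw [cntW_single_w (Ne.symm hne')]
                simpa using hInv.wc1 j' _
            · rw [Function.update_of_ne hne]; exact hInv.wc1 j' y
          · -- rc1
            intro i' y
            rcases eq_or_ne y (c.wst j).mc.widx with rfl | hne
            · rw [Function.update_self, cntR_append, cntR_single_w]
              simpa using hInv.rc1 i' _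
            · rw [Function.update_of_ne hne]; exact hInv.rc1 i' y
          · -- rloc
            intro i'
            exact Rloc_update (hInv.rloc i') _ _ (cntR_single_w i' j _ _)
          · -- wloc
            intro j'
            rcases eq_or_ne j' j with rfl | hne
            · rw [Function.update_self]
              refine ⟨W.mcg, ?_⟩
              intro y hy
              have hy' : (c.wst j').mc.widx + 1 ≤ y := hy
              have hney : y ≠ (c.wst j').mc.widx := by omega
              rw [Function.update_of_ne hney]
              exact W.free y (by rw [hf]; omega)
            · rw [Function.update_of_ne hne]
              exact Wloc_update (hInv.wloc j') _ _ (cntW_single_w (Ne.symm hne) _ _)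
      | adt a => exact hst.elim
  | mRead p v =>
      obtain ⟨hv, hp⟩ := hst
      subst hv
      cases p with
      | rdr i =>
          have R := hInv.rloc i
          rcases hp with ⟨hpc, hc⟩ | ⟨hpc, hc⟩
          · -- preM
            by_cases hEq : c.M.widx = (c.rst i).lsr
            · rw [if_pos hEq] at hc
              subst hc
              refine Inv_upR' hInv i _ ?_ rfl rfl rfl rfl
              refine ⟨hInv.gm, R.lsrle, ?_, hEq⟩
              intro y
              rcases R.star y with h | h | ⟨he, hl, _⟩
              · exact Or.inl h
              · exact Or.inr (Or.inl h)
              · exact Or.inr (Or.inr ⟨he, hl, trivial⟩)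
            · rw [if_neg hEq] at hc
              subst hc
              refine Inv_upR' hInv i _ ?_ rfl rfl rfl rfl
              refine ⟨hInv.gm, R.lsrle, ?_, trivial⟩
              intro y
              rcases R.star y with h | h | ⟨he, hl, _⟩
              · exact Or.inl h
              · exact Or.inr (Or.inl h)
              · exfalso; apply hEq; omega
          · -- loopM
            by_cases hlt : (c.rst i).lsr < c.M.ridx i
            · rw [if_pos hlt] at hc
              subst hc
              refine Inv_upR' hInv i _ ?_ rfl rfl rfl rfl
              refine ⟨hInv.gm, hInv.gm i, ?_, trivial⟩
              intro y
              rcases R.star y with h | h | ⟨he, hl, hs⟩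
              · exact Or.inl h
              · exact Or.inr (Or.inl h)
              · rw [hpc] at hs; exact (hs : False).elim
            · rw [if_neg hlt] at hc
              subst hc
              have hcnt0 : cntR i (c.slr c.M.widx) = 0 := by
                rcases R.star c.M.widx with h | h | ⟨he, hl, hs⟩
                · exact h
                · exact absurd h (lt_irrefl _)
                · rw [hpc] at hs; exact (hs : False).elim
              refine Inv_upR' hInv i _ ?_ rfl rfl rfl rfl
              refine ⟨hInv.gm, le_refl _, ?_, ⟨rfl, hcnt0⟩⟩
              intro y
              rcases R.star y with h | h | ⟨he, hl, hs⟩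
              · exact Or.inl h
              · exact Or.inr (Or.inl h)
              · rw [hpc] at hs; exact (hs : False).elim
      | wtr j =>
          obtain ⟨hpc, hc⟩ := hp
          subst hc
          have W := hInv.wloc j
          have hf : wfrontS c.M.widx (c.wst j) = c.M.widx := by unfold wfrontS; rw [hpc]
          refine Inv_upW' hInv j _ ?_ rfl rfl rfl rfl
          refine ⟨hInv.gm, ?_⟩
          intro y hy
          exact W.free y (by rw [hf]; exact hy)
      | adt a =>
          obtain ⟨hpc, hc⟩ := hp
          subst hc
          exact Inv_of_eq hInv rfl rfl rfl rfl
  | mWrite p v =>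
      cases p with
      | rdr i =>
          have R := hInv.rloc i
          rcases hst with ⟨hpc, hv, hc⟩ | ⟨hpc, hhw, hv, hc⟩
          · -- preHelp
            have hcond := R.cond
            unfold rcond at hcond
            rw [hpc] at hcond
            have hmceq : (c.rst i).mc.widx = (c.rst i).lsr := hcond
            subst hv
            have hw1 : c.M.widx ≤ (wmax c.M (mArg (c.rst i).mc (c.rst i).win (c.rst i).lsr
                (c.rst i).lval)).widx := wmax_widx_left _ _
            have hw2 : (c.rst i).lsr + 1 ≤ (wmax c.M (mArg (c.rst i).mc (c.rst i).win
                (c.rst i).lsr (c.rst i).lval)).widx := by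
              have := wmax_widx_right c.M (mArg (c.rst i).mc (c.rst i).win (c.rst i).lsr
                (c.rst i).lval)
              rwa [mArg_widx] at this
            refine Inv_build (slr := c.slr)
              (M := wmax c.M (mArg (c.rst i).mc (c.rst i).win (c.rst i).lsr (c.rst i).lval))
              (rst := Function.update c.rst i { c.rst i with pc := RPC.loopM })
              (wst := c.wst)
              (by rw [hc]; try rfl) (by rw [hc]; try rfl) (by rw [hc]; try rfl) (by rw [hc]; try rfl)
              (le_trans hInv.m0 hw1)
              (wmax_gm hInv.gm (mArg_gm _ _ _ R.mcg (by omega)))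
              hInv.wc1 hInv.rc1 ?_ ?_
            · intro i'
              rcases eq_or_ne i' i with rfl | hne
              · rw [Function.update_self]
                have hlt' : (c.rst i').lsr < (wmax c.M (mArg (c.rst i').mc (c.rst i').win
                    (c.rst i').lsr (c.rst i').lval)).widx := by omega
                refine ⟨R.mcg, le_of_lt hlt', ?_, trivial⟩
                intro y
                rcases R.star y with h | h | ⟨he, hl, _⟩
                · exact Or.inl h
                · exact Or.inr (Or.inl (lt_of_lt_of_le h hw1))
                · exact Or.inr (Or.inl (by rw [hl]; exact hlt'))
              · rw [Function.update_of_ne hne]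
                exact Rloc_mono hw1 (hInv.rloc i')
            · intro j
              exact Wloc_mono hw1 (hInv.wloc j)
          · -- helpChk
            have hcond := R.cond
            unfold rcond at hcond
            rw [hpc] at hcond
            obtain ⟨hmceq, hmem⟩ := hcond
            subst hv
            have hw1 : c.M.widx ≤ (wmax c.M (mArg (c.rst i).mc (c.rst i).win (c.rst i).lsr
                (c.rst i).lval)).widx := wmax_widx_left _ _
            have hw2 : (c.rst i).lsr + 1 ≤ (wmax c.M (mArg (c.rst i).mc (c.rst i).win
                (c.rst i).lsr (c.rst i).lval)).widx := by
              have := wmax_widx_right c.M (mArg (c.rst i).mc (c.rst i).win (c.rst i).lsr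
                (c.rst i).lval)
              rwa [mArg_widx] at this
            refine Inv_build (slr := c.slr)
              (M := wmax c.M (mArg (c.rst i).mc (c.rst i).win (c.rst i).lsr (c.rst i).lval))
              (rst := Function.update c.rst i { c.rst i with pc := RPC.loopEnd })
              (wst := c.wst)
              (by rw [hc]; try rfl) (by rw [hc]; try rfl) (by rw [hc]; try rfl) (by rw [hc]; try rfl)
              (le_trans hInv.m0 hw1)
              (wmax_gm hInv.gm (mArg_gm _ _ _ R.mcg (by omega)))
              hInv.wc1 hInv.rc1 ?_ ?_
            · intro i'
              rcases eq_or_ne i' i with rfl | hne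
              · rw [Function.update_self]
                have hlt' : (c.rst i').lsr < (wmax c.M (mArg (c.rst i').mc (c.rst i').win
                    (c.rst i').lsr (c.rst i').lval)).widx := by omega
                refine ⟨R.mcg, le_of_lt hlt', ?_, ⟨hmem, fun _ => hlt'⟩⟩
                intro y
                rcases R.star y with h | h | ⟨he, hl, _⟩
                · exact Or.inl h
                · exact Or.inr (Or.inl (lt_of_lt_of_le h hw1))
                · exact Or.inr (Or.inl (by rw [hl]; exact hlt'))
              · rw [Function.update_of_ne hne]
                exact Rloc_mono hw1 (hInv.rloc i')
            · intro j
              exact Wloc_mono hw1 (hInv.wloc j)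
      | wtr j =>
          obtain ⟨hpc, hv, hc⟩ := hst
          have W := hInv.wloc j
          subst hv
          have hw1 : c.M.widx ≤ (wmax c.M (mArg (c.wst j).mc (c.wst j).win (c.wst j).mc.widx
              (c.wst j).val)).widx := wmax_widx_left _ _
          have hw2 : (c.wst j).mc.widx + 1 ≤ (wmax c.M (mArg (c.wst j).mc (c.wst j).win
              (c.wst j).mc.widx (c.wst j).val)).widx := by
            have := wmax_widx_right c.M (mArg (c.wst j).mc (c.wst j).win (c.wst j).mc.widx
              (c.wst j).val)
            rwa [mArg_widx] at this
          have hf : wfrontS c.M.widx (c.wst j) = (c.wst j).mc.widx + 1 := by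
            unfold wfrontS; rw [hpc]
          refine Inv_build (slr := c.slr)
            (M := wmax c.M (mArg (c.wst j).mc (c.wst j).win (c.wst j).mc.widx (c.wst j).val))
            (rst := c.rst)
            (wst := Function.update c.wst j { c.wst j with pc := WPC.wret })
            (by rw [hc]; try rfl) (by rw [hc]; try rfl) (by rw [hc]; try rfl) (by rw [hc]; try rfl)
            (le_trans hInv.m0 hw1)
            (wmax_gm hInv.gm (mArg_gm _ _ _ W.mcg (by omega)))
            hInv.wc1 hInv.rc1 ?_ ?_
          · intro i'
            exact Rloc_mono hw1 (hInv.rloc i')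
          · intro j'
            rcases eq_or_ne j' j with rfl | hne
            · rw [Function.update_self]
              refine ⟨W.mcg, ?_⟩
              intro y hy
              have hy' : (wmax c.M (mArg (c.wst j').mc (c.wst j').win (c.wst j').mc.widx
                  (c.wst j').val)).widx ≤ y := hy
              exact W.free y (by rw [hf]; omega)
            · rw [Function.update_of_ne hne]
              exact Wloc_mono hw1 (hInv.wloc j')
      | adt a => exact hst.elim
  | hRead j k a =>
      obtain ⟨hpc, hk, ha, hc⟩ := hst
      have W := hInv.wloc j
      have hf : wfrontS c.M.widx (c.wst j) = (c.wst j).mc.widx := by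
        unfold wfrontS; rw [hpc]
      by_cases hlt : (c.wst j).mc.ridx k < a
      · rw [if_pos hlt] at hc
        subst hc
        refine Inv_upW' hInv j _ ?_ rfl rfl rfl rfl
        refine ⟨W.mcg, ?_⟩
        intro y hy
        exact W.free y (by rw [hf]; exact hy)
      · rw [if_neg hlt] at hc
        subst hc
        refine Inv_upW' hInv j _ ?_ rfl rfl rfl rfl
        refine ⟨W.mcg, ?_⟩
        intro y hy
        have hf2 : wfrontS c.M.widx ({ c.wst j with k := (c.wst j).k + 1 } : WState m n)
            = (c.wst j).mc.widx := by
          simp only [wfrontS, hpc]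
        rw [hf2] at hy
        exact W.free y (by rw [hf]; exact hy)
  | hWrite i x =>
      obtain ⟨hpc, hx, hc⟩ := hst
      subst hc
      have R := hInv.rloc i
      have hcond := R.cond
      unfold rcond at hcond
      rw [hpc] at hcond
      obtain ⟨hmceq, hcnt0⟩ := hcond
      refine Inv_upR' hInv i ({ c.rst i with pc := RPC.wSLR }) ?_ rfl rfl rfl rfl
      refine ⟨R.mcg, R.lsrle, ?_, ⟨hmceq, hcnt0⟩⟩
      intro y
      rcases R.star y with h | h | ⟨he, hl, hs⟩
      · exact Or.inl h
      · exact Or.inr (Or.inl h)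
      · rw [hpc] at hs; exact (hs : False).elim
  | tau p =>
      cases p with
      | rdr i =>
          have R := hInv.rloc i
          rcases hst with ⟨hpc, hhw, hc⟩ | ⟨hpc, hc⟩
          · -- helpChk, no w-tuple
            subst hc
            have hcond := R.cond
            unfold rcond at hcond
            rw [hpc] at hcond
            obtain ⟨hmceq, hmem⟩ := hcond
            refine Inv_upR' hInv i _ ?_ rfl rfl rfl rfl
            refine ⟨R.mcg, R.lsrle, ?_, ⟨hmem, fun h => by simp [h] at hhw⟩⟩
            intro y
            rcases R.star y with h | h | ⟨he, hl, _⟩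
            · exact Or.inl h
            · exact Or.inr (Or.inl h)
            · exact Or.inr (Or.inr ⟨he, hl, trivial⟩)
          · -- loopEnd
            have hcond := R.cond
            unfold rcond at hcond
            rw [hpc] at hcond
            obtain ⟨hmem, hwend⟩ := hcond
            by_cases hr : i ∈ readersOf (c.rst i).win
            · rw [if_pos hr] at hc
              subst hc
              refine Inv_upR' hInv i _ ?_ rfl rfl rfl rfl
              refine ⟨R.mcg, R.lsrle, ?_, trivial⟩
              intro y
              rcases R.star y with h | h | ⟨he, hl, _⟩
              · exact Or.inl h
              · exact Or.inr (Or.inl h)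
              · exact Or.inr (Or.inr ⟨he, hl, trivial⟩)
            · rw [if_neg hr] at hc
              subst hc
              have hlt : (c.rst i).lsr < c.M.widx := by
                by_cases hhw : hasW (c.rst i).win = true
                · exact hwend hhw
                · exact absurd (mem_readersOf (Bool.not_eq_true _ ▸ hhw :
                    hasW (c.rst i).win = false) hmem) hr
              refine Inv_upR' hInv i _ ?_ rfl rfl rfl rfl
              refine ⟨R.mcg, R.lsrle, ?_, trivial⟩
              intro y
              rcases R.star y with h | h | ⟨he, hl, _⟩
              · exact Or.inl h
              · exact Or.inr (Or.inl h)
              · exact Or.inr (Or.inl (by omega))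
      | wtr j =>
          obtain ⟨hpc, hk, hc⟩ := hst
          subst hc
          have W := hInv.wloc j
          have hf : wfrontS c.M.widx (c.wst j) = (c.wst j).mc.widx := by
            unfold wfrontS; rw [hpc]
          refine Inv_upW' hInv j _ ?_ rfl rfl rfl rfl
          refine ⟨W.mcg, ?_⟩
          intro y hy
          exact W.free y (by rw [hf]; exact hy)
      | adt a => exact hst.elim

end StepLemma

section Main

variable {v0 : Val} {j0 : Fin n}

/-- Along any step, each sliding register is unchanged or extended by one entry. -/
lemma slr_step {c c' : Config m n} {l : Lbl m n} (hInv : Inv c) (hst : Step c l c') (x : ℤ) :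
    c'.slr x = c.slr x ∨ ∃ e : Entry m n, c'.slr x = c.slr x ++ [e] := by
  cases l with
  | invRead i => obtain ⟨_, hc⟩ := hst; left; rw [hc]; try rfl
  | respRead i v => obtain ⟨_, _, hc⟩ := hst; left; rw [hc]; try rfl
  | invWrite j v => obtain ⟨_, hc⟩ := hst; left; rw [hc]; try rfl
  | respWrite j => obtain ⟨_, hc⟩ := hst; left; rw [hc]; try rfl
  | invAudit a => obtain ⟨_, hc⟩ := hst; left; rw [hc]; try rfl
  | respAudit a A => obtain ⟨_, _, hc⟩ := hst; left; rw [hc]; try rfl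
  | slrRead p y win =>
      obtain ⟨hwin, hp⟩ := hst
      left
      cases p with
      | rdr i => rcases hp with ⟨_,_,hc⟩|⟨_,_,hc⟩|⟨_,_,hc⟩|⟨_,_,hc⟩ <;> (rw [hc]; try rfl)
      | wtr j => rcases hp with ⟨_,_,_,hc⟩|⟨_,_,hc⟩|⟨_,_,hc⟩ <;> (rw [hc]; try rfl)
      | adt a => rcases hp with ⟨_,_,hc⟩|⟨_,_,hc⟩ <;> (rw [hc]; try rfl)
  | slrWrite p y e =>
      cases p with
      | rdr i =>
          obtain ⟨hpc, hy, he, hc⟩ := hst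
          subst hy; subst he
          have R := hInv.rloc i
          have hcond := R.cond
          unfold rcond at hcond
          rw [hpc] at hcond
          obtain ⟨-, hcnt0⟩ := hcond
          have hlen : (c.slr (c.rst i).lsr).length < m + n :=
            length_lt_of_cntR _ i hcnt0 (fun j' => hInv.wc1 j' _) (fun i' => hInv.rc1 i' _)
          rw [slide_eq_append hlen] at hc
          have hs : c'.slr = Function.update c.slr (c.rst i).lsr
              (c.slr (c.rst i).lsr ++ [Entry.r i]) := by rw [hc]; try rfl
          rw [hs]
          rcases eq_or_ne x (c.rst i).lsr with rfl | hne
          · right; exact ⟨Entry.r i, by rw [Function.update_self]⟩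
          · left; rw [Function.update_of_ne hne]
      | wtr j =>
          obtain ⟨hpc, hy, he, hc⟩ := hst
          subst hy; subst he
          have W := hInv.wloc j
          have hf : wfrontS c.M.widx (c.wst j) = (c.wst j).mc.widx := by
            unfold wfrontS; rw [hpc]
          have hcnt0 : cntW j (c.slr (c.wst j).mc.widx) = 0 := W.free _ (le_of_eq hf)
          have hlen : (c.slr (c.wst j).mc.widx).length < m + n :=
            length_lt_of_cntW _ j hcnt0 (fun j' => hInv.wc1 j' _) (fun i' => hInv.rc1 i' _)
          rw [slide_eq_append hlen] at hc
          have hs : c'.slr = Function.update c.slr (c.wst j).mc.widx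
              (c.slr (c.wst j).mc.widx ++ [Entry.w j (c.wst j).v (c.wst j).toHelp]) := by
            rw [hc]; try rfl
          rw [hs]
          rcases eq_or_ne x (c.wst j).mc.widx with rfl | hne
          · right; exact ⟨_, by rw [Function.update_self]⟩
          · left; rw [Function.update_of_ne hne]
      | adt a => exact hst.elim
  | mRead p v =>
      obtain ⟨hv, hp⟩ := hst
      left
      cases p with
      | rdr i => rcases hp with ⟨_, hc⟩|⟨_, hc⟩ <;> (rw [hc]; try rfl)
      | wtr j => obtain ⟨_, hc⟩ := hp; rw [hc]; try rfl
      | adt a => obtain ⟨_, hc⟩ := hp; rw [hc]; try rfl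
  | mWrite p v =>
      cases p with
      | rdr i => rcases hst with ⟨_,_,hc⟩|⟨_,_,_,hc⟩ <;> (left; rw [hc]; try rfl)
      | wtr j => obtain ⟨_,_,hc⟩ := hst; left; rw [hc]; try rfl
      | adt a => exact hst.elim
  | hRead j k a => obtain ⟨_,_,_,hc⟩ := hst; left; rw [hc]; try rfl
  | hWrite i y => obtain ⟨_,_,hc⟩ := hst; left; rw [hc]; try rfl
  | tau p =>
      cases p with
      | rdr i => rcases hst with ⟨_,_,hc⟩|⟨_,hc⟩ <;> (left; rw [hc]; try rfl)
      | wtr j => obtain ⟨_,_,hc⟩ := hst; left; rw [hc]; try rfl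
      | adt a => exact hst.elim

/-- The invariant holds in every reachable configuration. -/
lemma Inv_exec (E : Exec m n v0 j0) : ∀ t, t ≤ E.len → Inv (E.cfg t) := by
  intro t
  induction t with
  | zero => intro _; rw [E.h0]; exact Inv_init
  | succ t ih =>
      intro h
      exact Inv_step (ih (by omega)) (E.hstep t (by omega))

/-- Once a register contains a `w`-tuple, it keeps one, and its set of
    readers never changes. -/
lemma readers_stable_mono (E : Exec m n v0 j0) (x : ℤ) {t t' : ℕ} (htt' : t ≤ t')
    (hlen : t' ≤ E.len) (h : hasW ((E.cfg t).slr x) = true) :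
    hasW ((E.cfg t').slr x) = true ∧
      readersOf ((E.cfg t').slr x) = readersOf ((E.cfg t).slr x) := by
  induction t', htt' using Nat.le_induction with
  | base => exact ⟨h, rfl⟩
  | succ t' htt' ih =>
      have hlt : t' < E.len := by omega
      obtain ⟨hW, hRd⟩ := ih (by omega)
      rcases slr_step (Inv_exec E t' (by omega)) (E.hstep t' hlt) x with heq | ⟨e, happ⟩
      · rw [heq]; exact ⟨hW, hRd⟩
      · rw [happ]
        exact ⟨hasW_append_left hW, by rw [readersOf_append _ hW]; exact hRd⟩

end Main


/-- Proposition `same_readers`.  In any execution of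
Algorithm 1, if `win` and `win'` are two sequences read from the sliding
register `SLR[x]` after a write of a `w`-tuple has been applied to `SLR[x]`
(i.e., the contents of `SLR[x]` in any two configurations in which `SLR[x]`
contains a `w`-tuple), then `READERS(win) = READERS(win')`. -/
theorem readers_stable (m n : ℕ) (v0 : Val) (j0 : Fin n) (E : Exec m n v0 j0)
    (x : ℤ) (t₁ t₂ : ℕ) (h₁ : t₁ ≤ E.len) (h₂ : t₂ ≤ E.len)
    (hw₁ : hasW ((E.cfg t₁).slr x) = true) (hw₂ : hasW ((E.cfg t₂).slr x) = true) :
    readersOf ((E.cfg t₁).slr x) = readersOf ((E.cfg t₂).slr x) := by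
  rcases le_total t₁ t₂ with h | h
  · exact ((readers_stable_mono E x h h₂ hw₁).2).symm
  · exact (readers_stable_mono E x h h₁ hw₂).2

end Alg1
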